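/- BFR paradox: for any z with |z| > 1.96 and any n > 0, there exist prior variances 0 < τ₁² < τ₂² such that BF(z, n·τ₁²) < 1 and BF(z, n·τ₂²) > 1. -/

import Mathlib

/-!
Writing `BF z k = exp ((log (1 + k) - z² k / (1 + k)) / 2)`, the sign of the exponent decides.
At `k = 1` it is `log 2 - z² / 2`, negative as soon as `z² > 2 log 2` (and `1.96² > 2 > 2 log 2`);
at `k = exp z²` it is positive, since `log (1 + k) > z² ≥ z² k / (1 + k)`.
-/

noncomputable def BF (z k : ℝ) : ℝ := Real.sqrt (1 + k) * Real.exp (-(z^2 * k) / (2 * (1 + k)))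

open Real

lemma BF_eq_exp (z : ℝ) {k : ℝ} (hk : -1 < k) :
    BF z k = exp ((log (1 + k) - z ^ 2 * k / (1 + k)) / 2) := by
  have h1k : 0 < 1 + k := by linarith
  rw [BF, sqrt_eq_rpow, rpow_def_of_pos h1k, ← exp_add]
  congr 1
  field_simp
  ring

lemma BF_lt_one_iff (z : ℝ) {k : ℝ} (hk : -1 < k) :
    BF z k < 1 ↔ log (1 + k) < z ^ 2 * k / (1 + k) := by
  rw [BF_eq_exp z hk, exp_lt_one_iff]
  constructor <;> intro h <;> linarith

lemma one_lt_BF_iff (z : ℝ) {k : ℝ} (hk : -1 < k) :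
    1 < BF z k ↔ z ^ 2 * k / (1 + k) < log (1 + k) := by
  rw [BF_eq_exp z hk, one_lt_exp_iff]
  constructor <;> intro h <;> linarith

lemma BF_one_lt_one {z : ℝ} (hz : 2 * log 2 < z ^ 2) : BF z 1 < 1 := by
  rw [BF_lt_one_iff z (by norm_num), one_add_one_eq_two, mul_one]
  linarith

lemma one_lt_BF_exp_sq (z : ℝ) : 1 < BF z (exp (z ^ 2)) := by
  have hk := exp_pos (z ^ 2)
  rw [one_lt_BF_iff z (by linarith)]
  calc z ^ 2 * exp (z ^ 2) / (1 + exp (z ^ 2))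
      ≤ z ^ 2 := by
        rw [div_le_iff₀ (by positivity)]
        nlinarith [sq_nonneg z]
    _ < log (1 + exp (z ^ 2)) := by
        rw [lt_log_iff_exp_lt (by positivity)]
        linarith

theorem exists_BF_lt_one_and_one_lt_BF {z : ℝ} (hz : 2 * log 2 < z ^ 2) :
    ∃ k₁ k₂ : ℝ, 0 < k₁ ∧ k₁ < k₂ ∧ BF z k₁ < 1 ∧ 1 < BF z k₂ := by
  have hz0 : 0 < z ^ 2 := lt_trans (by positivity) hz
  exact ⟨1, exp (z ^ 2), one_pos, one_lt_exp_iff.mpr hz0, BF_one_lt_one hz, one_lt_BF_exp_sq z⟩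

theorem bfr_paradox (z n : ℝ) (hz : 1.96 < |z|) (hn : 0 < n) :
    ∃ τ₁ τ₂ : ℝ, 0 < τ₁^2 ∧ τ₁^2 < τ₂^2 ∧
      BF z (n * τ₁^2) < 1 ∧ 1 < BF z (n * τ₂^2) := by
  have hz2 : 2 * log 2 < z ^ 2 := by
    have hlog2 : log 2 < 1 := by linarith [log_lt_sub_one_of_pos two_pos (by norm_num)]
    nlinarith [sq_abs z, abs_nonneg z]
  obtain ⟨k₁, k₂, hk₁, hk₁₂, hBF₁, hBF₂⟩ := exists_BF_lt_one_and_one_lt_BF hz2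
  have hk₂ : 0 < k₂ := hk₁.trans hk₁₂
  have hτ : ∀ {k : ℝ}, 0 < k → sqrt (k / n) ^ 2 = k / n := fun hk => sq_sqrt (by positivity)
  refine ⟨sqrt (k₁ / n), sqrt (k₂ / n), ?_, ?_, ?_, ?_⟩
  · rw [hτ hk₁]; positivity
  · rw [hτ hk₁, hτ hk₂]; gcongr
  · rwa [hτ hk₁, mul_div_cancel₀ _ hn.ne']
  · rwa [hτ hk₂, mul_div_cancel₀ _ hn.ne']
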